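/- Modulo 9, the cube of the eta-quotient series satisfies ((q;q)_∞³/(q³;q³)_∞)³ ≡ 1 (mod 9) as formal power series with integer coefficients. -/

import Mathlib

/-!
Modulo 9 each factor satisfies `(1 - q^n)^9 = (1 - q^{3n})^3`, so `(q;q)_∞^9 ≡ (q³;q³)_∞^3`, and
multiplying by the cube of the inverse of the unit `(q³;q³)_∞` gives the claim. Since `infProd` is
defined coefficientwise, the factorwise identity is transported through the partial products, which
agree with `infProd f` modulo `X^k`.
-/

open PowerSeries

/-- Coefficientwise infinite product of power series over `ℤ`: valid whenever the
`n`-th factor does not affect coefficients below `q^{n+1}`. -/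
noncomputable def infProd (f : ℕ → PowerSeries ℤ) : PowerSeries ℤ :=
  PowerSeries.mk fun d => PowerSeries.coeff (R := ℤ) d (∏ n ∈ Finset.range (d + 1), f n)

/-- `(q;q)_∞ = ∏_{n≥1}(1-q^n)` over `ℤ`. -/
noncomputable def qProdInf : PowerSeries ℤ :=
  infProd fun n => 1 - (X : PowerSeries ℤ) ^ (n + 1)

/-- `(q³;q³)_∞ = ∏_{n≥1}(1-q^{3n})` over `ℤ`. -/
noncomputable def q3ProdInf : PowerSeries ℤ :=
  infProd fun n => 1 - (X : PowerSeries ℤ) ^ (3 * (n + 1))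

namespace PowerSeries

variable {R : Type*} [CommRing R]

theorem eq_of_forall_X_pow_dvd_sub {f g : R⟦X⟧} (h : ∀ k, X ^ k ∣ f - g) : f = g := by
  ext m
  rw [← sub_eq_zero, ← map_sub]
  exact X_pow_dvd_iff.mp (h (m + 1)) m m.lt_succ_self

theorem X_pow_dvd_one_sub_X_pow_sub_one {k m : ℕ} (h : k ≤ m) :
    X ^ k ∣ (1 - X ^ m : R⟦X⟧) - 1 := by
  rw [sub_sub_cancel_left, dvd_neg]
  exact pow_dvd_pow X h

end PowerSeries

theorem Finset.dvd_prod_sub_one {R ι : Type*} [CommRing R] {a : R} {s : Finset ι} {f : ι → R}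
    (hf : ∀ i ∈ s, a ∣ f i - 1) : a ∣ ∏ i ∈ s, f i - 1 := by
  rw [← Ideal.mem_span_singleton, ← Ideal.Quotient.eq, map_prod, map_one]
  refine Finset.prod_eq_one fun i hi => ?_
  rw [← map_one (Ideal.Quotient.mk _), Ideal.Quotient.eq, Ideal.mem_span_singleton]
  exact hf i hi

-- `(1 - u)^3 ≡ 1 - u^3 (mod 3)`, and cubing lifts a congruence mod 3 to one mod 9.
theorem one_sub_pow_nine_eq {R : Type*} [CommRing R] (h9 : (9 : R) = 0) (u : R) :
    (1 - u) ^ 9 = (1 - u ^ 3) ^ 3 := by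
  linear_combination (-u + 4 * u ^ 2 - 9 * u ^ 3 + 14 * u ^ 4 - 14 * u ^ 5 + 9 * u ^ 6
    - 4 * u ^ 7 + u ^ 8) * h9

open Finset

theorem X_pow_dvd_prod_range_sub_prod_range {R : Type*} [CommRing R] {f : ℕ → R⟦X⟧}
    (hf : ∀ n, X ^ (n + 1) ∣ f n - 1) {k N : ℕ} (hkN : k ≤ N) :
    X ^ k ∣ ∏ n ∈ range N, f n - ∏ n ∈ range k, f n := by
  rw [← prod_range_mul_prod_Ico f hkN, ← mul_sub_one]
  refine Dvd.dvd.mul_left (dvd_prod_sub_one fun n hn => ?_) _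
  exact (pow_dvd_pow X ((mem_Ico.mp hn).1.trans n.le_succ)).trans (hf n)

theorem X_pow_dvd_infProd_sub_prod_range {f : ℕ → ℤ⟦X⟧} (hf : ∀ n, X ^ (n + 1) ∣ f n - 1)
    (k : ℕ) : X ^ k ∣ infProd f - ∏ n ∈ range k, f n := by
  refine X_pow_dvd_iff.mpr fun m hm => ?_
  obtain ⟨g, hg⟩ := X_pow_dvd_prod_range_sub_prod_range hf hm
  rw [map_sub, infProd, coeff_mk, ← map_sub, ← neg_sub, hg, map_neg, coeff_X_pow_mul',
    if_neg (by omega), neg_zero]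

theorem constantCoeff_infProd (f : ℕ → ℤ⟦X⟧) :
    constantCoeff (infProd f) = constantCoeff (f 0) := by
  rw [← coeff_zero_eq_constantCoeff_apply, infProd, coeff_mk, zero_add, prod_range_one,
    coeff_zero_eq_constantCoeff_apply]

theorem isUnit_q3ProdInf : IsUnit q3ProdInf := by
  rw [isUnit_iff_constantCoeff, q3ProdInf, constantCoeff_infProd]
  simp

theorem map_qProdInf_pow_nine :
    qProdInf.map (Int.castRingHom (ZMod 9)) ^ 9 = q3ProdInf.map (Int.castRingHom (ZMod 9)) ^ 3 := by
  set φ := PowerSeries.map (Int.castRingHom (ZMod 9))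
  refine eq_of_forall_X_pow_dvd_sub fun k => ?_
  set P := ∏ n ∈ range k, (1 - X ^ (n + 1) : (ZMod 9)⟦X⟧)
  set Q := ∏ n ∈ range k, (1 - X ^ (3 * (n + 1)) : (ZMod 9)⟦X⟧)
  have hP : X ^ k ∣ φ qProdInf - P := by
    simpa [φ, P, qProdInf] using map_dvd φ (X_pow_dvd_infProd_sub_prod_range
      (fun n => X_pow_dvd_one_sub_X_pow_sub_one (m := n + 1) le_rfl) k)
  have hQ : X ^ k ∣ φ q3ProdInf - Q := by
    simpa [φ, Q, q3ProdInf] using map_dvd φ (X_pow_dvd_infProd_sub_prod_range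
      (fun n => X_pow_dvd_one_sub_X_pow_sub_one (m := 3 * (n + 1)) (by omega)) k)
  have hPQ : P ^ 9 = Q ^ 3 := by
    have h9 : (9 : (ZMod 9)⟦X⟧) = 0 := by
      rw [← map_ofNat C, show (9 : ZMod 9) = 0 by decide, map_zero]
    rw [← prod_pow, ← prod_pow]
    refine prod_congr rfl fun n _ => ?_
    rw [one_sub_pow_nine_eq h9, ← pow_mul, mul_comm]
  have hsplit : φ qProdInf ^ 9 - φ q3ProdInf ^ 3
      = (φ qProdInf ^ 9 - P ^ 9) - (φ q3ProdInf ^ 3 - Q ^ 3) := by rw [hPQ]; ring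
  rw [hsplit]
  exact dvd_sub (hP.trans (sub_dvd_pow_sub_pow _ _ 9)) (hQ.trans (sub_dvd_pow_sub_pow _ _ 3))

/-- `((q;q)_∞³/(q³;q³)_∞)³ ≡ 1 (mod 9)`: every coefficient of the cube of the
eta-quotient `(q;q)_∞³ · (q³;q³)_∞⁻¹` is congruent mod 9 to the corresponding
coefficient of `1`. (`(q³;q³)_∞` has constant term `1`, hence is a unit, and
`Ring.inverse` is its genuine inverse.) -/
theorem eta_quotient_cube_mod_nine :
    ∀ d : ℕ, PowerSeries.coeff (R := ℤ) d ((qProdInf ^ 3 * Ring.inverse q3ProdInf) ^ 3)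
      ≡ PowerSeries.coeff (R := ℤ) d 1 [ZMOD 9] := by
  intro d
  refine (ZMod.intCast_eq_intCast_iff _ _ 9).mp ?_
  set φ := PowerSeries.map (Int.castRingHom (ZMod 9))
  have key : φ ((qProdInf ^ 3 * Ring.inverse q3ProdInf) ^ 3) = φ 1 := calc
    _ = φ qProdInf ^ 9 * φ (Ring.inverse q3ProdInf) ^ 3 := by simp only [map_pow, map_mul]; ring
    _ = φ (q3ProdInf * Ring.inverse q3ProdInf) ^ 3 := by
      rw [map_qProdInf_pow_nine, map_mul, mul_pow]
    _ = φ 1 := by rw [Ring.mul_inverse_cancel _ isUnit_q3ProdInf, map_one, one_pow]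
  simpa only [φ, coeff_map, eq_intCast] using congrArg (coeff d) key
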